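/- arXiv:2411.03084 — 5 statements merged into one kernel-verified Lean document; each statement's English description precedes it below -/
import Mathlib

section
/- Fix β > 0 and define g(ρ) = (√((β+ρ−1)² + 4ρ) − (β+ρ−1)) / (2ρ) for ρ > 0. Then g is differentiable at every ρ > 0 with derivative g'(ρ) = − g(ρ)(1+g(ρ))² / (β + ρ(1+g(ρ))²); in particular g'(ρ) < 0 for every ρ > 0, so g is strictly decreasing on (0,∞). -/
/-!
Write `a = β + ρ - 1` and `D = a² + 4ρ > 0`. Then `G = g(ρ)` is the positive root of
`ρ G² + a G - 1 = 0`, and `√D = 2ρG + a`. Differentiating the closed form (equivalently, the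
quadratic implicitly) gives `g' = -G(1+G)/√D`, and the quadratic rewrites `√D (1+G)` as
`β + ρ(1+G)²`. Since `G > 0` and `√D > 0`, the derivative is negative.
-/

open Real Set

noncomputable section

/-- The large-system quantity `g(β, ρ)` of regularized zero-forcing precoding. -/
def rzfG (β ρ : ℝ) : ℝ :=
  (√((β + ρ - 1) ^ 2 + 4 * ρ) - (β + ρ - 1)) / (2 * ρ)

namespace rzfG

variable {β ρ : ℝ}

theorem discr_pos (hρ : 0 < ρ) : 0 < (β + ρ - 1) ^ 2 + 4 * ρ := by positivity

theorem sqrt_discr_pos (hρ : 0 < ρ) : 0 < √((β + ρ - 1) ^ 2 + 4 * ρ) :=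
  sqrt_pos.mpr (discr_pos hρ)

theorem pos (hρ : 0 < ρ) : 0 < rzfG β ρ := by
  have hlt : β + ρ - 1 < √((β + ρ - 1) ^ 2 + 4 * ρ) :=
    lt_sqrt_of_sq_lt (by linarith)
  exact div_pos (sub_pos.mpr hlt) (by positivity)

theorem sqrt_discr_eq (hρ : 0 < ρ) :
    √((β + ρ - 1) ^ 2 + 4 * ρ) = 2 * ρ * rzfG β ρ + (β + ρ - 1) := by
  unfold rzfG
  field_simp
  ring

theorem quadratic_eq_zero (hρ : 0 < ρ) :
    ρ * rzfG β ρ ^ 2 + (β + ρ - 1) * rzfG β ρ - 1 = 0 := by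
  have hsq := sq_sqrt (discr_pos (β := β) hρ).le
  rw [sqrt_discr_eq hρ] at hsq
  have h4 : 4 * ρ * (ρ * rzfG β ρ ^ 2 + (β + ρ - 1) * rzfG β ρ - 1) = 0 := by
    linear_combination hsq
  exact (mul_eq_zero.mp h4).resolve_left (by positivity)

theorem add_mul_one_add_sq (hρ : 0 < ρ) :
    β + ρ * (1 + rzfG β ρ) ^ 2 = √((β + ρ - 1) ^ 2 + 4 * ρ) * (1 + rzfG β ρ) := by
  rw [sqrt_discr_eq hρ]
  linear_combination -quadratic_eq_zero hρ

theorem hasDerivAt_affine (β ρ : ℝ) : HasDerivAt (fun x ↦ β + x - 1) 1 ρ := by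
  simpa using ((hasDerivAt_id' ρ).const_add β).sub_const 1

theorem hasDerivAt_sqrt_discr (hρ : 0 < ρ) :
    HasDerivAt (fun x ↦ √((β + x - 1) ^ 2 + 4 * x))
      ((β + ρ - 1 + 2) / √((β + ρ - 1) ^ 2 + 4 * ρ)) ρ := by
  have hD : HasDerivAt (fun x ↦ (β + x - 1) ^ 2 + 4 * x) (2 * (β + ρ - 1) + 4) ρ := by
    refine ((hasDerivAt_affine β ρ).fun_pow 2 |>.fun_add
      ((hasDerivAt_id' ρ).const_mul 4)).congr_deriv ?_
    ring
  refine (hD.sqrt (discr_pos hρ).ne').congr_deriv ?_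
  field_simp
  ring

theorem hasDerivAt_neg_div_sqrt_discr (hρ : 0 < ρ) :
    HasDerivAt (rzfG β)
      (-(rzfG β ρ * (1 + rzfG β ρ) / √((β + ρ - 1) ^ 2 + 4 * ρ))) ρ := by
  have hnum := (hasDerivAt_sqrt_discr (β := β) hρ).fun_sub (hasDerivAt_affine β ρ)
  have hquot := hnum.fun_div ((hasDerivAt_id' ρ).const_mul 2) (by simp [hρ.ne'])
  refine hquot.congr_deriv ?_
  have hs := sqrt_discr_eq (β := β) hρ
  have hs0 := (sqrt_discr_pos (β := β) hρ).ne'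
  set s := √((β + ρ - 1) ^ 2 + 4 * ρ)
  field_simp
  linear_combination (-(s + 2 * ρ * rzfG β ρ + ρ)) * hs - 2 * ρ * quadratic_eq_zero hρ

theorem hasDerivAt (hρ : 0 < ρ) :
    HasDerivAt (rzfG β)
      (-(rzfG β ρ * (1 + rzfG β ρ) ^ 2 / (β + ρ * (1 + rzfG β ρ) ^ 2))) ρ := by
  convert hasDerivAt_neg_div_sqrt_discr hρ using 2
  rw [add_mul_one_add_sq hρ, pow_two, ← mul_assoc,
    mul_div_mul_right _ _ (by linarith [pos (β := β) hρ])]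

theorem deriv_neg (hρ : 0 < ρ) : deriv (rzfG β) ρ < 0 := by
  rw [(hasDerivAt_neg_div_sqrt_discr hρ).deriv, neg_lt_zero]
  have := pos (β := β) hρ
  have := sqrt_discr_pos (β := β) hρ
  positivity

theorem strictAntiOn : StrictAntiOn (rzfG β) (Ioi 0) := by
  refine strictAntiOn_of_deriv_neg (convex_Ioi 0)
    (fun ρ hρ ↦ (hasDerivAt hρ).continuousAt.continuousWithinAt) ?_
  rw [interior_Ioi]
  exact fun ρ hρ ↦ deriv_neg hρ

end rzfG

end

theorem stmt2_general (β : ℝ)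
    (g : ℝ → ℝ)
    (hg : ∀ ρ, g ρ = (Real.sqrt ((β + ρ - 1) ^ 2 + 4 * ρ) - (β + ρ - 1)) / (2 * ρ)) :
    (∀ ρ : ℝ, 0 < ρ →
      HasDerivAt g (-(g ρ * (1 + g ρ) ^ 2 / (β + ρ * (1 + g ρ) ^ 2))) ρ) ∧
    (∀ ρ : ℝ, 0 < ρ → deriv g ρ < 0) ∧
    StrictAntiOn g (Set.Ioi 0) := by
  obtain rfl : g = rzfG β := funext hg
  exact ⟨fun _ ↦ rzfG.hasDerivAt, fun _ ↦ rzfG.deriv_neg, rzfG.strictAntiOn⟩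

/-- For fixed `β > 0`, the function `g(ρ) = (√((β+ρ−1)² + 4ρ) − (β+ρ−1))/(2ρ)` is
differentiable at every `ρ > 0` with derivative `−g(ρ)(1+g(ρ))²/(β + ρ(1+g(ρ))²)`,
which is negative, so `g` is strictly decreasing on `(0,∞)`. -/
theorem stmt2 (β : ℝ) (hβ : 0 < β)
    (g : ℝ → ℝ)
    (hg : ∀ ρ, g ρ = (Real.sqrt ((β + ρ - 1) ^ 2 + 4 * ρ) - (β + ρ - 1)) / (2 * ρ)) :
    (∀ ρ : ℝ, 0 < ρ →
      HasDerivAt g (-(g ρ * (1 + g ρ) ^ 2 / (β + ρ * (1 + g ρ) ^ 2))) ρ) ∧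
    (∀ ρ : ℝ, 0 < ρ → deriv g ρ < 0) ∧
    StrictAntiOn g (Set.Ioi 0) :=
  stmt2_general β g hg
end

section
/- Let N ≥ 1 be a real number, let K_L and K be integers with 1 ≤ K_L ≤ K ≤ N, let u_L, u, u_U be reals with 0 ≤ u_L ≤ u ≤ u_U ≤ 1, and let c > 0. Then (N/K − u²) / (((K−1)/K)·(1−u)² + c) ≤ (N/K_L − u_L²) / (((K_L−1)/K_L)·(1−u_U)² + c). -/
/-- The enhanced channel gain of a branch-and-bound search box upper-bounds the
channel gain `λ(u,K) = (N/K − u²)/(((K−1)/K)(1−u)² + c)` over the whole box. -/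
theorem stmt10 (N : ℝ) (hN : 1 ≤ N) (KL K : ℤ)
    (hKL : 1 ≤ KL) (hK : KL ≤ K) (hKN : (K : ℝ) ≤ N)
    (uL u uU : ℝ) (h0 : 0 ≤ uL) (h1 : uL ≤ u) (h2 : u ≤ uU) (h3 : uU ≤ 1)
    (c : ℝ) (hc : 0 < c) :
    (N / (K : ℝ) - u ^ 2) / (((K : ℝ) - 1) / (K : ℝ) * (1 - u) ^ 2 + c) ≤
      (N / (KL : ℝ) - uL ^ 2) / (((KL : ℝ) - 1) / (KL : ℝ) * (1 - uU) ^ 2 + c) := by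
  have hKL0 : (0:ℝ) < (KL:ℝ) := by exact_mod_cast hKL
  have hK0 : (0:ℝ) < (K:ℝ) := lt_of_lt_of_le hKL0 (by exact_mod_cast hK)
  have hKK : (KL:ℝ) ≤ (K:ℝ) := by exact_mod_cast hK
  have hN0 : (0:ℝ) < N := lt_of_lt_of_le one_pos hN
  have hu1 : u ≤ 1 := h2.trans h3
  have hu0 : 0 ≤ u := h0.trans h1
  -- numerators
  have hnum : N / (K:ℝ) - u ^ 2 ≤ N / (KL:ℝ) - uL ^ 2 := by
    have h1' : N / (K:ℝ) ≤ N / (KL:ℝ) := div_le_div_of_nonneg_left hN0.le hKL0 hKK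
    have h2' : uL ^ 2 ≤ u ^ 2 := pow_le_pow_left₀ h0 h1 2
    linarith
  have hnum0 : 0 ≤ N / (KL:ℝ) - uL ^ 2 := by
    have : (1:ℝ) ≤ N / (KL:ℝ) := by
      rw [le_div_iff₀ hKL0]
      have : (KL:ℝ) ≤ N := hKK.trans hKN
      linarith
    have huL1 : uL ≤ 1 := h1.trans hu1
    nlinarith
  -- denominators
  have hfrac : ((KL:ℝ) - 1) / (KL:ℝ) ≤ ((K:ℝ) - 1) / (K:ℝ) := by
    rw [div_le_div_iff₀ hKL0 hK0]
    nlinarith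
  have hfrac0 : 0 ≤ ((KL:ℝ) - 1) / (KL:ℝ) := by
    apply div_nonneg _ hKL0.le
    have : (1:ℝ) ≤ (KL:ℝ) := by exact_mod_cast hKL
    linarith
  have hsq : (1 - uU) ^ 2 ≤ (1 - u) ^ 2 := by nlinarith
  have hsq0 : 0 ≤ (1 - uU) ^ 2 := sq_nonneg _
  have hden : ((KL:ℝ) - 1) / (KL:ℝ) * (1 - uU) ^ 2 + c ≤
      ((K:ℝ) - 1) / (K:ℝ) * (1 - u) ^ 2 + c := by
    have := mul_le_mul hfrac hsq hsq0 ((hfrac0.trans hfrac))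
    linarith
  have hden0 : 0 < ((KL:ℝ) - 1) / (KL:ℝ) * (1 - uU) ^ 2 + c := by positivity
  exact div_le_div₀ hnum0 hnum hden0 hden
end

section
/- Let β, τ, c be reals with 0 < β ≤ 1, 0 < τ < 1, and c > 0, and define λ(u) = (1/β − u²)/(τ(1−u)² + c) for u ∈ [0,1]. Then λ attains its maximum over [0,1] at a unique point u*, and u* lies in the open interval (0,1). -/
/-- For `0 < β ≤ 1`, `0 < τ < 1`, `c > 0`, the function
`λ(u) = (1/β − u²)/(τ(1−u)² + c)` attains its maximum over `[0,1]` at a unique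
point, which lies in the open interval `(0,1)`. -/
theorem stmt14 (β τ c : ℝ) (hβ0 : 0 < β) (hβ1 : β ≤ 1)
    (hτ0 : 0 < τ) (hτ1 : τ < 1) (hc : 0 < c)
    (f : ℝ → ℝ) (hf : ∀ u, f u = (1 / β - u ^ 2) / (τ * (1 - u) ^ 2 + c)) :
    ∃ ustar : ℝ, ustar ∈ Set.Ioo (0 : ℝ) 1 ∧
      (∀ u ∈ Set.Icc (0 : ℝ) 1, f u ≤ f ustar) ∧
      ∀ v ∈ Set.Icc (0 : ℝ) 1, (∀ u ∈ Set.Icc (0 : ℝ) 1, f u ≤ f v) → v = ustar := by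
  -- auxiliary function g whose root gives the maximizer
  set g : ℝ → ℝ := fun u => τ * (1 - u) * (1 / β - u) - c * u with hg
  have hgc : ContinuousOn g (Set.Icc (0:ℝ) 1) := by
    apply Continuous.continuousOn; fun_prop
  have hg0 : 0 < g 0 := by
    simp only [hg]
    have : 0 < 1 / β := by positivity
    nlinarith
  have hg1 : g 1 < 0 := by simp [hg]; nlinarith
  have : (0:ℝ) ∈ Set.Ioo (g 1) (g 0) := ⟨hg1, hg0⟩
  obtain ⟨r, hrmem, hgr⟩ := intermediate_value_Ioo' (by norm_num : (0:ℝ) ≤ 1) hgc this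
  obtain ⟨hr0, hr1⟩ := hrmem
  have hreq : τ * (1 - r) * (1 / β - r) - c * r = 0 := hgr
  -- denominators positive
  have hD : ∀ u : ℝ, 0 < τ * (1 - u) ^ 2 + c := fun u => by positivity
  -- 1/β ≥ 1
  have hβinv : 1 ≤ 1 / β := by
    rw [le_div_iff₀ hβ0]; linarith
  have hA : 0 < τ * (1 / β - r ^ 2) + (τ * (1 - r) ^ 2 + c) := by nlinarith
  -- key identity and strict/nonstrict inequalities
  have key : ∀ u : ℝ, (1 / β - r ^ 2) * (τ * (1 - u) ^ 2 + c)
      - (1 / β - u ^ 2) * (τ * (1 - r) ^ 2 + c)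
      = (τ * (1 / β - r ^ 2) + (τ * (1 - r) ^ 2 + c)) * (u - r) ^ 2 := by
    intro u
    linear_combination (-2 * (u - r)) * hreq
  have hle : ∀ u : ℝ, f u ≤ f r := by
    intro u
    rw [hf, hf, div_le_div_iff₀ (hD u) (hD r)]
    nlinarith [key u, sq_nonneg (u - r)]
  have hlt : ∀ u : ℝ, u ≠ r → f u < f r := by
    intro u hu
    rw [hf, hf, div_lt_div_iff₀ (hD u) (hD r)]
    have h2 : (0:ℝ) < (u - r) ^ 2 := by
      have := sub_ne_zero.mpr hu
      positivity
    nlinarith [key u]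
  refine ⟨r, ⟨hr0, hr1⟩, fun u _ => hle u, fun v hv hmax => ?_⟩
  by_contra hne
  have h1 : f v < f r := hlt v hne
  have h2 : f r ≤ f v := hmax r ⟨le_of_lt hr0, le_of_lt hr1⟩
  linarith
end

section
/- Let N ≥ 2 be an integer and c > 0 a real. For an integer M with 2 ≤ M ≤ N define λ_M(u) = (N/M − u²)/(((M−1)/M)(1−u)² + c) for u ∈ [0,1], and let u*(M) denote the unique maximizer of λ_M over [0,1]. Then for all integers M₁, M₂ with 2 ≤ M₁ < M₂ ≤ N, one has u*(M₁) > u*(M₂). -/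
open Set

/-- Strict maximality at a critical point. -/
lemma aux_max (τ a c u : ℝ) (hτ : 0 < τ) (ha : 1 ≤ a) (hc : 0 < c)
    (hu1 : u ≤ 1) (hroot : τ*(1-u)*(a-u) - c*u = 0) :
    ∀ v : ℝ, v ≠ u →
      (a - v^2)/(τ*(1-v)^2+c) < (a - u^2)/(τ*(1-u)^2+c) := by
  intro v hvu
  have hdu : 0 < τ*(1-u)^2 + c := by positivity
  have hdv : 0 < τ*(1-v)^2 + c := by positivity
  rw [div_lt_div_iff₀ hdv hdu]
  have h1 : (a - u^2)*(τ*(1-v)^2+c) - (a - v^2)*(τ*(1-u)^2+c)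
      = 2*(u-v)*(τ*(1-u)*(a-u) - c*u) + (v-u)^2*(c + τ*(a+1-2*u)) := by ring
  have h2 : 0 < (v-u)^2 := by
    have : v - u ≠ 0 := sub_ne_zero.mpr hvu
    positivity
  have hB : 0 < c + τ*(a+1-2*u) := by nlinarith
  nlinarith [mul_pos h2 hB]

/-- Monotonicity of the (rescaled) critical function. -/
lemma aux_mono (n m c u v : ℝ) (hm : 2 ≤ m) (hmn : m ≤ n) (hc : 0 < c)
    (hu : u ∈ Icc (0:ℝ) 1) (hv : v ∈ Icc (0:ℝ) 1) (huv : u ≤ v) :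
    (m-1)*(1-v)*(n-m*v) - c*v*m^2 ≤ (m-1)*(1-u)*(n-m*u) - c*u*m^2 := by
  have hid : ((m-1)*(1-u)*(n-m*u) - c*u*m^2) - ((m-1)*(1-v)*(n-m*v) - c*v*m^2)
      = (u-v)*((m-1)*(m*(u+v)-n-m) - c*m^2) := by ring
  have hbr : (m-1)*(m*(u+v)-n-m) - c*m^2 < 0 := by
    have h1 : m*(u+v) - n - m ≤ 0 := by nlinarith [hu.2, hv.2]
    have h2 : 0 < c*m^2 := by positivity
    nlinarith [mul_nonneg (show (0:ℝ) ≤ m-1 by linarith) (neg_nonneg.mpr h1)]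
  nlinarith [mul_nonneg (sub_nonneg.mpr huv) (le_of_lt (neg_pos.mpr hbr))]

/-- The key strict inequality: the critical function for a larger `m` is negative
at the root for the smaller `m`. -/
lemma aux_key (n m₁ m₂ c u : ℝ) (h2 : 2 ≤ m₁) (h12 : m₁ < m₂) (h2n : m₂ ≤ n)
    (hc : 0 < c) (hu0 : 0 < u) (hu1 : u < 1)
    (hroot : (m₁-1)*(1-u)*(n-m₁*u) - c*u*m₁^2 = 0) :
    (m₂-1)*(1-u)*(n-m₂*u) - c*u*m₂^2 < 0 := by
  have hid : m₂^2*((m₁-1)*(1-u)*(n-m₁*u)) - m₁^2*((m₂-1)*(1-u)*(n-m₂*u))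
      = (1-u)*(m₂-m₁)*(u*m₁*m₂ + n*(m₁*m₂-m₁-m₂)) := by ring
  have hn : (0:ℝ) < n := by linarith
  have hpos : 0 < (1-u)*(m₂-m₁)*(u*m₁*m₂ + n*(m₁*m₂-m₁-m₂)) := by
    have hm₁ : (0:ℝ) < m₁ := by linarith
    have hm₂ : (0:ℝ) < m₂ := by linarith
    have hA : 0 < u*m₁*m₂ := by positivity
    have hB : 0 < m₁*m₂ - m₁ - m₂ := by nlinarith
    have hC : 0 < n*(m₁*m₂-m₁-m₂) := mul_pos hn hB
    have h1u : (0:ℝ) < 1 - u := by linarith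
    have hd : (0:ℝ) < m₂ - m₁ := by linarith
    positivity
  have hm1 : (0:ℝ) < m₁^2 := by positivity
  have h3 : m₁^2 * ((m₂-1)*(1-u)*(n-m₂*u) - c*u*m₂^2) < m₁^2 * 0 := by nlinarith
  exact lt_of_mul_lt_mul_left (by linarith [h3]) (le_of_lt hm1)

/-- Existence of a root in (0,1) which is the strict maximizer. -/
lemma root_spec (n m c : ℝ) (hm : 2 ≤ m) (hmn : m ≤ n) (hc : 0 < c) :
    ∃ u, 0 < u ∧ u < 1 ∧ (m-1)*(1-u)*(n-m*u) - c*u*m^2 = 0 ∧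
      ∀ v : ℝ, v ≠ u →
        (n/m - v^2)/((m-1)/m*(1-v)^2+c) < (n/m - u^2)/((m-1)/m*(1-u)^2+c) := by
  have hm0 : (0:ℝ) < m := by linarith
  set H : ℝ → ℝ := fun u => (m-1)*(1-u)*(n-m*u) - c*u*m^2 with hH
  have hcont : ContinuousOn H (Icc (0:ℝ) 1) := by
    apply Continuous.continuousOn; continuity
  have hH0 : H 0 = (m-1)*n := by simp [hH]
  have hH1 : H 1 = -(c*m^2) := by simp [hH]
  have hH0pos : 0 < H 0 := by rw [hH0]; nlinarith
  have hH1neg : H 1 < 0 := by rw [hH1]; linarith [mul_pos hc (pow_pos hm0 2)]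
  have : (0:ℝ) ∈ Icc (H 1) (H 0) := ⟨le_of_lt hH1neg, le_of_lt hH0pos⟩
  obtain ⟨u, hu, hHu0⟩ := intermediate_value_Icc' (by norm_num : (0:ℝ) ≤ 1) hcont this
  have hHu : (m-1)*(1-u)*(n-m*u) - c*u*m^2 = 0 := hHu0
  have hune0 : u ≠ 0 := by rintro rfl; rw [hHu0] at hH0pos; exact lt_irrefl _ hH0pos
  have hune1 : u ≠ 1 := by rintro rfl; rw [hHu0] at hH1neg; exact lt_irrefl _ hH1neg
  have hu0 : 0 < u := lt_of_le_of_ne hu.1 (Ne.symm hune0)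
  have hu1 : u < 1 := lt_of_le_of_ne hu.2 hune1
  refine ⟨u, hu0, hu1, hHu, ?_⟩
  have hτ : 0 < (m-1)/m := div_pos (by linarith) hm0
  have ha : 1 ≤ n/m := (one_le_div hm0).mpr hmn
  have hrootdiv : (m-1)/m*(1-u)*(n/m-u) - c*u = 0 := by
    have hiden : (m-1)/m*(1-u)*(n/m-u) - c*u = ((m-1)*(1-u)*(n-m*u) - c*u*m^2)/m^2 := by
      field_simp
    rw [hiden, hHu, zero_div]
  exact aux_max ((m-1)/m) (n/m) c u hτ ha hc (le_of_lt hu1) hrootdiv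

/-- For `2 ≤ M ≤ N` the common SNR `λ_M(u) = (N/M − u²)/(((M−1)/M)(1−u)² + c)`
has a unique maximizer `u*(M)` over `[0,1]`, and this maximizer is strictly
decreasing in the number of users: if `2 ≤ M₁ < M₂ ≤ N` then `u*(M₁) > u*(M₂)`. -/
theorem stmt15 (N : ℤ) (hN : 2 ≤ N) (c : ℝ) (hc : 0 < c)
    (lam : ℤ → ℝ → ℝ)
    (hlam : ∀ (M : ℤ) (u : ℝ), lam M u =
      ((N : ℝ) / (M : ℝ) - u ^ 2) / (((M : ℝ) - 1) / (M : ℝ) * (1 - u) ^ 2 + c)) :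
    (∀ M : ℤ, 2 ≤ M → M ≤ N →
      ∃! u, u ∈ Set.Icc (0 : ℝ) 1 ∧ ∀ v ∈ Set.Icc (0 : ℝ) 1, lam M v ≤ lam M u) ∧
    ∀ M₁ M₂ : ℤ, 2 ≤ M₁ → M₁ < M₂ → M₂ ≤ N →
      ∀ u₁ u₂ : ℝ,
        (u₁ ∈ Set.Icc (0 : ℝ) 1 ∧ ∀ v ∈ Set.Icc (0 : ℝ) 1, lam M₁ v ≤ lam M₁ u₁) →
        (u₂ ∈ Set.Icc (0 : ℝ) 1 ∧ ∀ v ∈ Set.Icc (0 : ℝ) 1, lam M₂ v ≤ lam M₂ u₂) →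
        u₂ < u₁ := by
  have main : ∀ M : ℤ, 2 ≤ M → M ≤ N →
      ∃ u, 0 < u ∧ u < 1 ∧ ((M:ℝ)-1)*(1-u)*((N:ℝ)-(M:ℝ)*u) - c*u*(M:ℝ)^2 = 0 ∧
        (u ∈ Icc (0:ℝ) 1 ∧ ∀ v ∈ Icc (0:ℝ) 1, lam M v ≤ lam M u) ∧
        ∀ y, (y ∈ Icc (0:ℝ) 1 ∧ ∀ v ∈ Icc (0:ℝ) 1, lam M v ≤ lam M y) → y = u := by
    intro M hM2 hMN
    have hm2 : (2:ℝ) ≤ (M:ℝ) := by exact_mod_cast hM2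
    have hmn : ((M:ℝ)) ≤ (N:ℝ) := by exact_mod_cast hMN
    obtain ⟨u, hu0, hu1, hroot, hmax⟩ := root_spec (N:ℝ) (M:ℝ) c hm2 hmn hc
    refine ⟨u, hu0, hu1, hroot, ⟨⟨le_of_lt hu0, le_of_lt hu1⟩, ?_⟩, ?_⟩
    · intro v hv
      rw [hlam, hlam]
      rcases eq_or_ne v u with rfl | h
      · exact le_refl _
      · exact (hmax v h).le
    · intro y hy
      by_contra hne
      have h1 := hy.2 u ⟨le_of_lt hu0, le_of_lt hu1⟩
      have h2 := hmax y hne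
      rw [hlam, hlam] at h1
      linarith
  constructor
  · intro M hM2 hMN
    obtain ⟨u, _, _, _, hP, huniq⟩ := main M hM2 hMN
    exact ⟨u, hP, huniq⟩
  · intro M₁ M₂ hM1 hlt hM2N u₁ u₂ h1 h2
    obtain ⟨r₁, hr10, hr11, hroot1, hP1, huniq1⟩ := main M₁ hM1 (le_of_lt (lt_of_lt_of_le hlt hM2N))
    obtain ⟨r₂, hr20, hr21, hroot2, hP2, huniq2⟩ := main M₂ (by omega) hM2N
    have e1 := huniq1 u₁ h1
    have e2 := huniq2 u₂ h2
    subst e1; subst e2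
    by_contra hnot
    push_neg at hnot
    have hm1 : (2:ℝ) ≤ (M₁:ℝ) := by exact_mod_cast hM1
    have h12 : ((M₁:ℝ)) < (M₂:ℝ) := by exact_mod_cast hlt
    have h2n : ((M₂:ℝ)) ≤ (N:ℝ) := by exact_mod_cast hM2N
    have hkey := aux_key (N:ℝ) (M₁:ℝ) (M₂:ℝ) c u₁ hm1 h12 h2n hc hr10 hr11 hroot1
    have hmono := aux_mono (N:ℝ) (M₂:ℝ) c u₁ u₂ (by linarith) h2n hc
      ⟨le_of_lt hr10, le_of_lt hr11⟩ ⟨le_of_lt hr20, le_of_lt hr21⟩ hnot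
    linarith
end

section
/- Let N > 0 be a real number, let J and K be integers with 1 ≤ J < K and K ≤ N, let u be a real with 0 ≤ u < 1, and let c > 0. Then (N/K − u²) / (((K−1)/K)(1−u)² + c) < (N/K − (J/K)u²) / (((J−1)/J)(1−u)² + c). -/
/-- Lemma 4's key inequality: for `1 ≤ J < K ≤ N`, `0 ≤ u < 1` and `c > 0`,
`(N/K − u²)/(((K−1)/K)(1−u)² + c) < (N/K − (J/K)u²)/(((J−1)/J)(1−u)² + c)`. -/
theorem stmt18 (N : ℝ) (hN : 0 < N) (J K : ℤ) (hJ : 1 ≤ J) (hJK : J < K)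
    (hKN : (K : ℝ) ≤ N) (u : ℝ) (hu0 : 0 ≤ u) (hu1 : u < 1) (c : ℝ) (hc : 0 < c) :
    (N / (K : ℝ) - u ^ 2) / (((K : ℝ) - 1) / (K : ℝ) * (1 - u) ^ 2 + c) <
      (N / (K : ℝ) - (J : ℝ) / (K : ℝ) * u ^ 2) /
        (((J : ℝ) - 1) / (J : ℝ) * (1 - u) ^ 2 + c) := by
  have hJ1 : (1:ℝ) ≤ (J:ℝ) := by exact_mod_cast hJ
  have hJK' : (J:ℝ) < (K:ℝ) := by exact_mod_cast hJK
  have hK0 : (0:ℝ) < (K:ℝ) := by linarith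
  have hJ0 : (0:ℝ) < (J:ℝ) := by linarith
  have hum : (0:ℝ) < 1 - u := by linarith
  have hu2 : (0:ℝ) < (1-u)^2 := by positivity
  have hu2' : u^2 < 1 := by nlinarith
  have hB1 : 0 < ((K:ℝ) - 1) / (K:ℝ) * (1 - u) ^ 2 + c := by
    have h1 : 0 ≤ ((K:ℝ) - 1) / (K:ℝ) := div_nonneg (by linarith) hK0.le
    nlinarith [mul_nonneg h1 hu2.le]
  have hB2 : 0 < ((J:ℝ) - 1) / (J:ℝ) * (1 - u) ^ 2 + c := by
    have h1 : 0 ≤ ((J:ℝ) - 1) / (J:ℝ) := div_nonneg (by linarith) hJ0.le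
    nlinarith [mul_nonneg h1 hu2.le]
  have hBlt : ((J:ℝ) - 1) / (J:ℝ) * (1 - u) ^ 2 + c <
      ((K:ℝ) - 1) / (K:ℝ) * (1 - u) ^ 2 + c := by
    have h : ((J:ℝ) - 1) / (J:ℝ) < ((K:ℝ) - 1) / (K:ℝ) := by
      rw [div_lt_div_iff₀ hJ0 hK0]; nlinarith
    nlinarith [mul_lt_mul_of_pos_right h hu2]
  have hA2 : 0 < N / (K:ℝ) - (J:ℝ) / (K:ℝ) * u ^ 2 := by
    have h : N / (K:ℝ) - (J:ℝ) / (K:ℝ) * u ^ 2 = (N - (J:ℝ) * u ^ 2) / (K:ℝ) := by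
      ring
    rw [h]
    apply div_pos _ hK0
    nlinarith
  rcases le_or_gt (N / (K:ℝ) - u ^ 2) 0 with hA1 | hA1
  · calc (N / (K : ℝ) - u ^ 2) / (((K : ℝ) - 1) / (K : ℝ) * (1 - u) ^ 2 + c) ≤ 0 :=
        div_nonpos_of_nonpos_of_nonneg hA1 hB1.le
      _ < _ := div_pos hA2 hB2
  · have hA12 : N / (K:ℝ) - u ^ 2 ≤ N / (K:ℝ) - (J:ℝ) / (K:ℝ) * u ^ 2 := by
      have h : (J:ℝ) / (K:ℝ) ≤ 1 := by
        rw [div_le_one hK0]; linarith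
      nlinarith [sq_nonneg u]
    calc (N / (K : ℝ) - u ^ 2) / (((K : ℝ) - 1) / (K : ℝ) * (1 - u) ^ 2 + c)
        < (N / (K : ℝ) - u ^ 2) / (((J : ℝ) - 1) / (J : ℝ) * (1 - u) ^ 2 + c) :=
          div_lt_div_of_pos_left hA1 hB2 hBlt
      _ ≤ _ := (div_le_div_iff_of_pos_right hB2).mpr hA12
end
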